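/- Let r ≥ 2, k ≥ 1, ω = e^{2πi/r^{k+1}}, and let u be the Chu sequence of length r^{k+1} (for r even: u_n = e^{πi n²/r}). The Milewski sequence s of length r^{2k+1}, defined by s_{q·r^k + j} = u_{q mod r^{k+1}} · ω^{qj} for 0 ≤ q < r^{k+1}, 0 ≤ j < r^k, is perfect: all off-peak periodic autocorrelations of s (of period r^{2k+1}) are zero. -/

import Mathlib

/-!
Write `M = r^k`, `L = r^{k+1} = M r` and `ψ = exp (2πi / 2L)`, a primitive `2L`-th root of
unity. Then `s_n = ψ^{φ(n)}` with `φ(qM + j) = M q² + 2 q j` (`phase M`); the reductions of `q`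
mod `L` and of `n` mod `LM` are invisible modulo `2L` because `M` is even. The identity
`φ(qM + n) = φ(n) + M q² + 2 q n` makes the autocorrelation at shift `τ` factor as
`(∑_{q<L} ψ^{-2qτ}) · (∑_{j<M} ψ^{φ(j) - φ(j+τ)})`.
If `L ∤ τ` the first factor is a full geometric sum of a nontrivial `L`-th root of unity.
If `τ = L m`, then `M ∤ m` and the second factor is `ψ^{-M(rm)²}` times a full geometric sum of
the nontrivial `M`-th root of unity `ψ^{-2rm}`.
-/

open Finset Complex

theorem Finset.sum_range_mul_eq_sum_sum {β : Type*} [AddCommMonoid β] (L M : ℕ)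
    (f : ℕ → β) :
    ∑ t ∈ range (L * M), f t = ∑ q ∈ range L, ∑ j ∈ range M, f (q * M + j) := by
  induction L with
  | zero => simp
  | succ n ih => rw [sum_range_succ, ← ih, Nat.succ_mul, sum_range_add]

section PrimitiveRoot

variable {K : Type*} [Field K] {ζ : K} {n : ℕ}

theorem IsPrimitiveRoot.zpow_eq_zpow_of_modEq (h : IsPrimitiveRoot ζ n) {a b : ℤ}
    (hab : a ≡ b [ZMOD n]) : ζ ^ a = ζ ^ b := by
  rcases Nat.eq_zero_or_pos n with rfl | hn
  · rw [Int.natCast_zero, Int.modEq_zero_iff] at hab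
    rw [hab]
  · rw [← sub_add_cancel a b, zpow_add₀ (h.ne_zero hn.ne'),
      (h.zpow_eq_one_iff_dvd _).2 (Int.ModEq.dvd hab.symm), one_mul]

theorem IsPrimitiveRoot.geom_sum_zpow_eq_zero (h : IsPrimitiveRoot ζ n) {a : ℤ}
    (ha : ¬ (n : ℤ) ∣ a) : ∑ i ∈ range n, (ζ ^ a) ^ i = 0 := by
  have hpow : (ζ ^ a) ^ n = 1 := by
    rw [← zpow_natCast, ← zpow_mul, mul_comm, zpow_mul, zpow_natCast, h.pow_eq_one, one_zpow]
  have hne : ζ ^ a ≠ 1 := fun h' => ha ((h.zpow_eq_one_iff_dvd a).1 h')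
  rw [geom_sum_eq hne, hpow, sub_self, zero_div]

theorem IsPrimitiveRoot.conj_zpow {ζ : ℂ} (h : IsPrimitiveRoot ζ n) (hn : n ≠ 0) (m : ℤ) :
    starRingEnd ℂ (ζ ^ m) = ζ ^ (-m) := by
  rw [map_zpow₀, ← Complex.inv_eq_conj (h.norm'_eq_one hn), inv_zpow, zpow_neg]

end PrimitiveRoot

namespace Milewski

def phase (M n : ℕ) : ℤ := M * (n / M : ℕ) ^ 2 + 2 * (n / M : ℕ) * (n % M : ℕ)

theorem phase_mul_add {M : ℕ} (hM : 0 < M) (q n : ℕ) :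
    phase M (q * M + n) = phase M n + M * q ^ 2 + 2 * q * n := by
  have hdiv : (q * M + n) / M = q + n / M := by
    rw [add_comm, Nat.add_mul_div_right _ _ hM, add_comm]
  have hn : (n : ℤ) = M * (n / M : ℕ) + (n % M : ℕ) := by
    exact_mod_cast (Nat.div_add_mod n M).symm
  simp only [phase, hdiv, Nat.mul_add_mod_self_right, Nat.cast_add]
  linear_combination (-2 * q : ℤ) * hn

theorem phase_mod_modEq {M : ℕ} (hM : 0 < M) (hMe : Even M) (L n : ℕ) :
    phase M (n % (L * M)) ≡ phase M n [ZMOD 2 * L] := by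
  obtain ⟨m, hm⟩ := hMe
  have h := phase_mul_add hM (n / (L * M) * L) (n % (L * M))
  rw [mul_assoc, Nat.div_add_mod'] at h
  set c := n / (L * M)
  refine Int.modEq_iff_dvd.2 ⟨m * L * c ^ 2 + c * (n % (L * M) : ℕ), ?_⟩
  rw [h, hm]; push_cast; ring

variable {K : Type*} [Field K] {ζ : K}

theorem sum_zpow_phase_sub_phase {M : ℕ} (hζ : ζ ≠ 0) (hM : 0 < M) (L τ : ℕ) :
    ∑ t ∈ range (L * M), ζ ^ (phase M t - phase M (t + τ)) =
      (∑ q ∈ range L, ((ζ ^ 2) ^ (-τ : ℤ)) ^ q) *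
        ∑ j ∈ range M, ζ ^ (phase M j - phase M (j + τ)) := by
  rw [sum_range_mul_eq_sum_sum, sum_mul_sum]
  refine sum_congr rfl fun q _ => sum_congr rfl fun j _ => ?_
  have h : phase M (q * M + j) - phase M (q * M + j + τ) =
      2 * -τ * q + (phase M j - phase M (j + τ)) := by
    rw [add_assoc, phase_mul_add hM, phase_mul_add hM]; push_cast; ring
  rw [h, zpow_add₀ hζ, zpow_mul, zpow_mul, zpow_natCast, zpow_ofNat]

theorem sum_zpow_phase_sub_phase_add_mul_eq_zero {M r m : ℕ}
    (hζ : IsPrimitiveRoot ζ (2 * (M * r))) (hM : 0 < M) (hr : 0 < r) (hm : ¬ M ∣ m) :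
    ∑ j ∈ range M, ζ ^ (phase M j - phase M (j + M * r * m)) = 0 := by
  have hζ0 : ζ ≠ 0 := hζ.ne_zero (by positivity)
  have hterm : ∀ j, ζ ^ (phase M j - phase M (j + M * r * m)) =
      ζ ^ (-(M * (r * m) ^ 2 : ℤ)) * ((ζ ^ (2 * r)) ^ (-m : ℤ)) ^ j := by
    intro j
    rw [show j + M * r * m = r * m * M + j by ring, phase_mul_add hM, ← zpow_natCast,
      ← zpow_mul, ← zpow_natCast, ← zpow_mul, ← zpow_add₀ hζ0]
    push_cast; ring_nf
  have hprim : IsPrimitiveRoot (ζ ^ (2 * r)) M := hζ.pow (by positivity) (by ring)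
  rw [sum_congr rfl fun j _ => hterm j, ← mul_sum,
    hprim.geom_sum_zpow_eq_zero (by rwa [Int.dvd_neg, Int.natCast_dvd_natCast]), mul_zero]

theorem exp_chu_eq_pow {r M L : ℕ} (hM : 0 < M) (hLM : L = M * r) (n : ℕ) :
    exp (Real.pi * I * (n : ℂ) ^ 2 / r) =
      exp (2 * Real.pi * I / (2 * L : ℕ)) ^ (M * n ^ 2) := by
  have hM' : (M : ℂ) ≠ 0 := Nat.cast_ne_zero.2 hM.ne'
  rw [← exp_nat_mul, hLM]
  congr 1
  push_cast
  field_simp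

theorem exp_two_pi_div_pow_eq_pow (L m : ℕ) :
    exp (2 * Real.pi * I / (L : ℕ)) ^ m = exp (2 * Real.pi * I / (2 * L : ℕ)) ^ (2 * m) := by
  rw [pow_mul, ← exp_nat_mul _ 2]
  congr 2
  push_cast
  ring

theorem chu_mul_exp_pow_eq_zpow_phase {r M L : ℕ} (hr : 0 < r) (hM : 0 < M) (hMe : Even M)
    (hLM : L = M * r) (x : ℕ) :
    exp (Real.pi * I * ((x / M % L : ℕ) : ℂ) ^ 2 / r) *
        exp (2 * Real.pi * I / (L : ℕ)) ^ (x / M * (x % M)) =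
      exp (2 * Real.pi * I / (2 * L : ℕ)) ^ phase M x := by
  have hψ : IsPrimitiveRoot (exp (2 * Real.pi * I / (2 * L : ℕ))) (2 * L) :=
    isPrimitiveRoot_exp _ (by subst hLM; positivity)
  rw [exp_chu_eq_pow hM hLM, exp_two_pi_div_pow_eq_pow L, ← pow_add, ← zpow_natCast]
  apply hψ.zpow_eq_zpow_of_modEq
  obtain ⟨m, hm⟩ := hMe
  have hMZ : (M : ℤ) = 2 * m := by rw [hm]; push_cast; ring
  have hmod : ((x / M % L : ℕ) : ℤ) ^ 2 ≡ ((x / M : ℕ) : ℤ) ^ 2 [ZMOD L] := by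
    rw [Int.natCast_mod]; exact (Int.mod_modEq _ _).pow 2
  have := ((hmod.mul_left' (c := 2)).mul_left m).add_right (2 * (x / M : ℕ) * (x % M : ℕ))
  simp only [phase, Nat.cast_add, Nat.cast_mul, Nat.cast_pow, Nat.cast_ofNat, hMZ]
  convert this using 2 <;> ring

end Milewski

open Milewski

/-- Milewski sequences are perfect: for `r` even, the sequence of length `r^{2k+1}`
given by `s_{q·r^k + j} = u_q · ω^{qj}` (with `u_n = e^{πi n²/r}` the Chu sequence of
length `r^{k+1}` and `ω = e^{2πi/r^{k+1}}`) has all off-peak periodic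
autocorrelations equal to zero. -/
theorem milewski_sequence_perfect (r k : ℕ) (hr : Even r) (hr0 : 0 < r) (hk : 1 ≤ k) :
    ∀ τ : ℕ, ¬ r ^ (2 * k + 1) ∣ τ →
      ∑ t ∈ range (r ^ (2 * k + 1)),
        (Complex.exp (Real.pi * Complex.I * (((t / r ^ k) % r ^ (k + 1) : ℕ) : ℂ) ^ 2 / r) *
            Complex.exp (2 * Real.pi * Complex.I / (r ^ (k + 1) : ℕ)) ^
              ((t / r ^ k) * (t % r ^ k))) *
          (starRingEnd ℂ)
            (Complex.exp (Real.pi * Complex.I *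
                (((((t + τ) % r ^ (2 * k + 1)) / r ^ k) % r ^ (k + 1) : ℕ) : ℂ) ^ 2 / r) *
              Complex.exp (2 * Real.pi * Complex.I / (r ^ (k + 1) : ℕ)) ^
                ((((t + τ) % r ^ (2 * k + 1)) / r ^ k) * (((t + τ) % r ^ (2 * k + 1)) % r ^ k))) = 0 := by
  intro τ hτ
  set M := r ^ k
  set L := r ^ (k + 1)
  have hM : 0 < M := by positivity
  have hMe : Even M := hr.pow_of_ne_zero (by omega)
  have hLM : L = M * r := pow_succ r k
  have hN : r ^ (2 * k + 1) = L * M := by rw [← pow_add]; congr 1; omega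
  set ψ := exp (2 * Real.pi * I / (2 * L : ℕ))
  have hψ : IsPrimitiveRoot ψ (2 * L) := isPrimitiveRoot_exp _ (by positivity)
  have hψ0 : ψ ≠ 0 := hψ.ne_zero (by positivity)
  rw [hN] at hτ ⊢
  calc _ = ∑ t ∈ range (L * M), ψ ^ (phase M t - phase M (t + τ)) := by
        refine sum_congr rfl fun t _ => ?_
        rw [chu_mul_exp_pow_eq_zpow_phase hr0 hM hMe hLM,
          chu_mul_exp_pow_eq_zpow_phase hr0 hM hMe hLM, hψ.conj_zpow (by positivity), hψ.zpow_eq_zpow_of_modEq (phase_mod_modEq hM hMe L _).neg,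
          ← zpow_add₀ hψ0, sub_eq_add_neg]
    _ = _ := sum_zpow_phase_sub_phase hψ0 hM L τ
    _ = 0 := by
        by_cases hLτ : L ∣ τ
        · obtain ⟨m, rfl⟩ := hLτ
          rw [hLM, sum_zpow_phase_sub_phase_add_mul_eq_zero (hLM ▸ hψ) hM hr0
            fun h => hτ (mul_dvd_mul_left L h), mul_zero]
        · have hsq : IsPrimitiveRoot (ψ ^ 2) L := hψ.pow (by positivity) (by ring)
          rw [hsq.geom_sum_zpow_eq_zero (by rwa [Int.dvd_neg, Int.natCast_dvd_natCast]), zero_mul]
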